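/- arXiv:2209.01171 — 4 statements merged into one kernel-verified Lean document; each statement's English description precedes it below -/
import Mathlib

section
/- Let E be a Banach lattice and let f, g be elements of the positive cone of E. Then f belongs to the closure of the principal ideal generated by g if and only if the net f ∧ (t·g) converges in norm to f as t → ∞. -/
/-!
If `|x| ≤ c • g` and `t ≥ c`, then `f ⊓ |x| ≤ f ⊓ (t • g) ≤ f`, and a solid norm turns this into
`‖f - f ⊓ (t • g)‖ ≤ ‖f - |x|‖ ≤ ‖f - x‖`; so approximants of `f` from the ideal force the
convergence. Conversely, `f ⊓ (t • g)` lies in the ideal for `t ≥ 0`.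

Positivity of `t • g` for real `t ≥ 0` is not among the axioms assumed: it holds for dyadic
`t` because lattice-ordered groups are `2`-semiclosed, and then for all `t` since the positive
cone is closed.
-/

open Filter

/-- The principal ideal generated by `u` in a Banach lattice. -/
def principalIdeal {E : Type*} [NormedAddCommGroup E] [Lattice E] [HasSolidNorm E]
    [IsOrderedAddMonoid E] [NormedSpace ℝ E]
    (u : E) : Set E :=
  {x | ∃ c : ℝ, 0 ≤ c ∧ |x| ≤ c • u}

theorem nonneg_of_two_pow_nsmul_nonneg {α : Type*} [Lattice α] [AddCommGroup α]
    [IsOrderedAddMonoid α] {a : α} (k : ℕ) (ha : 0 ≤ 2 ^ k • a) : 0 ≤ a := by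
  induction k with
  | zero => simpa using ha
  | succ k ih => exact ih (nsmul_two_semiclosed (by rwa [pow_succ, mul_nsmul] at ha))

namespace HasSolidNorm

variable {E : Type*} [NormedAddCommGroup E] [Lattice E] [HasSolidNorm E]
  [IsOrderedAddMonoid E]

theorem norm_le_norm_of_nonneg_of_le {a b : E} (ha : 0 ≤ a) (hab : a ≤ b) : ‖a‖ ≤ ‖b‖ :=
  solid (by rwa [abs_of_nonneg ha, abs_of_nonneg (ha.trans hab)])

theorem norm_sub_inf_le_norm_sub {f x u : E} (hf : 0 ≤ f) (hxu : |x| ≤ u) :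
    ‖f - f ⊓ u‖ ≤ ‖f - x‖ :=
  calc ‖f - f ⊓ u‖ ≤ ‖f - f ⊓ |x|‖ :=
        norm_le_norm_of_nonneg_of_le (sub_nonneg.2 inf_le_left)
          (sub_le_sub_left (inf_le_inf_left f hxu) f)
    _ = ‖f ⊓ f - |x| ⊓ f‖ := by rw [inf_idem, inf_comm]
    _ ≤ ‖f - |x|‖ := norm_inf_sub_inf_le_norm _ _ _
    _ = ‖|f| - |x|‖ := by rw [abs_of_nonneg hf]
    _ ≤ ‖f - x‖ := norm_abs_sub_abs _ _

variable [NormedSpace ℝ E]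

theorem smul_nonneg {t : ℝ} (ht : 0 ≤ t) {g : E} (hg : 0 ≤ g) : 0 ≤ t • g := by
  have hdyadic (n k : ℕ) : 0 ≤ ((n : ℝ) / 2 ^ k) • g := by
    refine nonneg_of_two_pow_nsmul_nonneg k ?_
    rw [← Nat.cast_smul_eq_nsmul ℝ, smul_smul, Nat.cast_pow, Nat.cast_ofNat,
      mul_div_cancel₀ _ (by positivity), Nat.cast_smul_eq_nsmul]
    exact nsmul_nonneg hg n
  have hlim : Tendsto (fun k : ℕ => (⌊t * 2 ^ k⌋₊ : ℝ) / 2 ^ k) atTop (nhds t) :=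
    (tendsto_nat_floor_mul_div_atTop ht).comp
      (tendsto_pow_atTop_atTop_of_one_lt one_lt_two)
  exact isClosed_nonneg.mem_of_tendsto (hlim.smul_const g)
    (Eventually.of_forall fun k => hdyadic _ k)

theorem smul_le_smul_of_le {s t : ℝ} (hst : s ≤ t) {g : E} (hg : 0 ≤ g) : s • g ≤ t • g := by
  rw [← sub_nonneg, ← sub_smul]
  exact smul_nonneg (sub_nonneg.2 hst) hg

theorem inf_smul_mem_principalIdeal {f g : E} (hf : 0 ≤ f) (hg : 0 ≤ g) {t : ℝ} (ht : 0 ≤ t) :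
    f ⊓ t • g ∈ principalIdeal g :=
  ⟨t, ht, by rw [abs_of_nonneg (le_inf hf (smul_nonneg ht hg))]; exact inf_le_right⟩

end HasSolidNorm

theorem mem_closure_principalIdeal_iff_tendsto_general
    {E : Type*} [NormedAddCommGroup E] [Lattice E] [HasSolidNorm E]
    [IsOrderedAddMonoid E] [NormedSpace ℝ E]
    (f g : E) (hf : 0 ≤ f) (hg : 0 ≤ g) :
    f ∈ closure (principalIdeal g) ↔
      Tendsto (fun t : ℝ => f ⊓ (t • g)) atTop (nhds f) := by
  constructor
  · intro hmem
    refine Metric.tendsto_atTop.2 fun ε hε => ?_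
    obtain ⟨x, ⟨c, -, hxc⟩, hfx⟩ := Metric.mem_closure_iff.1 hmem ε hε
    refine ⟨c, fun t hct => ?_⟩
    rw [dist_comm, dist_eq_norm]
    calc ‖f - f ⊓ t • g‖ ≤ ‖f - x‖ :=
          HasSolidNorm.norm_sub_inf_le_norm_sub hf
            (hxc.trans (HasSolidNorm.smul_le_smul_of_le hct hg))
      _ < ε := by rwa [← dist_eq_norm]
  · intro htends
    exact mem_closure_of_tendsto htends
      ((eventually_ge_atTop 0).mono fun _ ht =>
        HasSolidNorm.inf_smul_mem_principalIdeal hf hg ht)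

/-- For positive elements `f, g` of a Banach lattice, `f` belongs to the closure of the
principal ideal generated by `g` if and only if `f ⊓ (t • g) → f` in norm as `t → ∞`. -/
theorem mem_closure_principalIdeal_iff_tendsto
    {E : Type*} [NormedAddCommGroup E] [Lattice E] [HasSolidNorm E]
    [IsOrderedAddMonoid E] [NormedSpace ℝ E] [CompleteSpace E]
    (f g : E) (hf : 0 ≤ f) (hg : 0 ≤ g) :
    f ∈ closure (principalIdeal g) ↔
      Tendsto (fun t : ℝ => f ⊓ (t • g)) atTop (nhds f) :=
  mem_closure_principalIdeal_iff_tendsto_general f g hf hg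
end

section
/- Let f, g : [0,1] → ℝ be continuous with f, g ≥ 0, and suppose {x : f(x) ≠ 0} ⊆ {x : g(x) ≠ 0}. Then the increasing net of functions x ↦ min(f(x), t·g(x)), for t ∈ (0,∞), converges uniformly to f as t → ∞. -/
open Filter

/-- Dini-type convergence: if `f, g ≥ 0` are continuous on `[0,1]` and the open support of
`f` is contained in the open support of `g`, then `x ↦ min (f x) (t * g x)` converges
uniformly to `f` as `t → ∞`. -/
theorem tendstoUniformly_min_smul
    (f g : C(Set.Icc (0 : ℝ) 1, ℝ)) (hf : 0 ≤ f) (hg : 0 ≤ g)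
    (hsupp : {x | f x ≠ 0} ⊆ {x | g x ≠ 0}) :
    TendstoUniformly (fun (t : ℝ) (x : Set.Icc (0 : ℝ) 1) => min (f x) (t * g x))
      (fun x => f x) atTop := by
  have hf' : ∀ x, 0 ≤ f x := fun x => hf x
  have hg' : ∀ x, 0 ≤ g x := fun x => hg x
  rw [Metric.tendstoUniformly_iff]
  intro ε hε
  set K : Set (Set.Icc (0:ℝ) 1) := {x | ε ≤ f x} with hKdef
  have hKclosed : IsClosed K := isClosed_le continuous_const f.continuous
  have hKc : IsCompact K := hKclosed.isCompact
  have small : ∀ (t : ℝ), 0 ≤ t → ∀ x, f x < ε →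
      dist (f x) (min (f x) (t * g x)) < ε := by
    intro t ht x hx
    have h0 : 0 ≤ min (f x) (t * g x) := le_min (hf' x) (mul_nonneg ht (hg' x))
    have h1 : min (f x) (t * g x) ≤ f x := min_le_left _ _
    rw [Real.dist_eq, abs_of_nonneg (by linarith)]
    linarith
  by_cases hK : K.Nonempty
  · obtain ⟨x₀, hx₀, hmin⟩ := hKc.exists_isMinOn hK g.continuous.continuousOn
    have hm : 0 < g x₀ := by
      have hfx₀ : f x₀ ≠ 0 := by
        have h : ε ≤ f x₀ := hx₀
        exact ne_of_gt (lt_of_lt_of_le hε h)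
      exact lt_of_le_of_ne (hg' x₀) (Ne.symm (hsupp hfx₀))
    obtain ⟨xM, -, hM⟩ := isCompact_univ.exists_isMaxOn Set.univ_nonempty
      f.continuous.continuousOn
    filter_upwards [eventually_ge_atTop (f xM / g x₀), eventually_ge_atTop 0] with t ht ht0
    intro x
    by_cases hx : ε ≤ f x
    · have hgx : g x₀ ≤ g x := hmin hx
      have h1 : f x ≤ t * g x := by
        calc f x ≤ f xM := hM trivial
        _ = (f xM / g x₀) * g x₀ := by field_simp
        _ ≤ t * g x₀ := mul_le_mul_of_nonneg_right ht hm.le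
        _ ≤ t * g x := mul_le_mul_of_nonneg_left hgx ht0
      rw [min_eq_left h1, dist_self]
      exact hε
    · exact small t ht0 x (not_le.mp hx)
  · filter_upwards [eventually_ge_atTop 0] with t ht0
    intro x
    refine small t ht0 x ?_
    by_contra h
    exact hK ⟨x, not_lt.mp h⟩
end

section
/- On E = C([−1,1]), define u(x) = 1 − |x|, v(x) = |x|·1_{[−1,0]}(x), w(x) = |x|·1_{[0,1]}(x), and the operator T f = (1/2)(∫_{−1}^{1} f(x) dx)·u + f(1)·v + f(−1)·w. Then T is a positive bounded linear operator with T𝟙 = 𝟙 (where 𝟙 is the constant function 1), and T(v − w) = −(v − w) with v − w ≠ 0; hence −1 is an eigenvalue of T even though T maps every nonzero nonnegative function to a function whose closed support is all of [−1,1]. -/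
/-!
`T` is a sum of three operators `f ↦ φ f • g` with `φ` a positive functional (half the integral,
evaluation at `1`, evaluation at `-1`) and `g ≥ 0`, so it is positive. Since `u + v + w = 1` and
`∫ 1 = 2`, `T 1 = 1`. Finally `v - w` is the function `x ↦ -x`: its integral vanishes and it takes
the value `-1` at `1` and `1` at `-1`, so `T (v - w) = w - v`.
-/

open MeasureTheory

attribute [local instance] MeasureTheory.Measure.Subtype.measureSpace

namespace ContinuousMap

variable {X : Type*} [TopologicalSpace X] [CompactSpace X] [MeasurableSpace X] [BorelSpace X]
  (μ : Measure X) [IsFiniteMeasure μ]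

noncomputable def integralCLM : C(X, ℝ) →L[ℝ] ℝ :=
  L1.integralCLM.comp (toLp 1 μ ℝ)

theorem integralCLM_apply (f : C(X, ℝ)) : integralCLM μ f = ∫ x, f x ∂μ := by
  rw [integralCLM, ContinuousLinearMap.comp_apply, ← L1.integral_eq, L1.integral_eq_integral]
  exact integral_congr_ae (coeFn_toLp μ f)

noncomputable def integralEvalOperator (c : ℝ) (u v w : C(X, ℝ)) (a b : X) :
    C(X, ℝ) →L[ℝ] C(X, ℝ) :=
  (c • integralCLM μ).smulRight u + (evalCLM ℝ a).smulRight v + (evalCLM ℝ b).smulRight w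

variable {μ}

theorem integralEvalOperator_apply (c : ℝ) (u v w : C(X, ℝ)) (a b : X) (f : C(X, ℝ)) (x : X) :
    integralEvalOperator μ c u v w a b f x = c * (∫ y, f y ∂μ) * u x + f a * v x + f b * w x := by
  simp [integralEvalOperator, integralCLM_apply, mul_assoc]

theorem integralEvalOperator_nonneg {c : ℝ} (hc : 0 ≤ c) {u v w : C(X, ℝ)} (hu : 0 ≤ u)
    (hv : 0 ≤ v) (hw : 0 ≤ w) (a b : X) {f : C(X, ℝ)} (hf : 0 ≤ f) :
    0 ≤ integralEvalOperator μ c u v w a b f := by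
  have pointwise {g : C(X, ℝ)} (hg : 0 ≤ g) (y : X) : 0 ≤ g y := by simpa using le_def.mp hg y
  refine le_def.mpr fun x => ?_
  rw [zero_apply, integralEvalOperator_apply]
  have := integral_nonneg (μ := μ) (f := f) (pointwise hf)
  have := pointwise hu x; have := pointwise hv x; have := pointwise hw x
  have := pointwise hf a; have := pointwise hf b
  positivity

end ContinuousMap

section Icc

variable {a b : ℝ}

instance : IsFiniteMeasure (volume : Measure (Set.Icc a b)) := by
  refine ⟨?_⟩
  rw [Measure.Subtype.volume_univ measurableSet_Icc.nullMeasurableSet, Real.volume_Icc]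
  exact ENNReal.ofReal_lt_top

theorem integral_Icc_subtype_eq_intervalIntegral (hab : a ≤ b) (g : ℝ → ℝ) :
    ∫ y : Set.Icc a b, g y = ∫ y in a..b, g y := by
  rw [integral_subtype measurableSet_Icc, integral_Icc_eq_integral_Ioc,
    intervalIntegral.integral_of_le hab]

end Icc

local notation "I" => Set.Icc (-1 : ℝ) 1

namespace TentRamp

def tent : C(I, ℝ) := ⟨fun x => 1 - |x.1|, by fun_prop⟩

def leftRamp : C(I, ℝ) := ⟨fun x => max (-x.1) 0, by fun_prop⟩

def rightRamp : C(I, ℝ) := ⟨fun x => max x.1 0, by fun_prop⟩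

theorem tent_nonneg : 0 ≤ tent := fun x => by
  simpa [tent] using abs_le.mpr ⟨x.2.1, x.2.2⟩

theorem leftRamp_nonneg : 0 ≤ leftRamp := fun _ => le_max_right _ _

theorem rightRamp_nonneg : 0 ≤ rightRamp := fun _ => le_max_right _ _

theorem tent_add_leftRamp_add_rightRamp (x : I) : tent x + leftRamp x + rightRamp x = 1 := by
  simp only [tent, leftRamp, rightRamp, ContinuousMap.coe_mk]
  rcases le_total (x : ℝ) 0 with h | h
  · rw [abs_of_nonpos h, max_eq_left (by linarith), max_eq_right h]; ring
  · rw [abs_of_nonneg h, max_eq_right (by linarith), max_eq_left h]; ring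

theorem coe_leftRamp_sub_rightRamp : ⇑(leftRamp - rightRamp) = fun x : I => -(x : ℝ) := by
  ext x
  simp only [leftRamp, rightRamp, ContinuousMap.sub_apply, ContinuousMap.coe_mk]
  linarith [max_zero_sub_max_neg_zero_eq_self (x : ℝ)]

theorem leftRamp_sub_rightRamp_ne_zero : leftRamp - rightRamp ≠ 0 := fun h => by
  have := congrFun coe_leftRamp_sub_rightRamp ⟨1, by norm_num⟩
  simp [h] at this

theorem integral_one : ∫ _ : I, (1 : ℝ) = 2 := by
  rw [integral_Icc_subtype_eq_intervalIntegral (by norm_num) fun _ => 1]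
  norm_num

theorem integral_leftRamp_sub_rightRamp : ∫ x : I, (leftRamp - rightRamp) x = 0 := by
  rw [coe_leftRamp_sub_rightRamp, integral_Icc_subtype_eq_intervalIntegral (by norm_num) (- ·),
    intervalIntegral.integral_neg, integral_id]
  norm_num

noncomputable def operator : C(I, ℝ) →L[ℝ] C(I, ℝ) :=
  ContinuousMap.integralEvalOperator volume (1 / 2) tent leftRamp rightRamp ⟨1, by norm_num⟩
    ⟨-1, by norm_num⟩

theorem operator_one : operator 1 = 1 := by
  ext x
  rw [operator, ContinuousMap.integralEvalOperator_apply]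
  simp only [ContinuousMap.one_apply, integral_one]
  linarith [tent_add_leftRamp_add_rightRamp x]

theorem operator_leftRamp_sub_rightRamp :
    operator (leftRamp - rightRamp) = -(leftRamp - rightRamp) := by
  ext x
  rw [operator, ContinuousMap.integralEvalOperator_apply, integral_leftRamp_sub_rightRamp,
    coe_leftRamp_sub_rightRamp, ContinuousMap.neg_apply, ContinuousMap.sub_apply]
  ring

end TentRamp

/-- On `C([-1,1])` there is a positive bounded operator
`T f = (1/2)(∫ f)·u + f(1)·v + f(-1)·w` (with `u(x) = 1 - |x|`, `v(x) = max(-x,0)`,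
`w(x) = max(x,0)`) which satisfies `T 1 = 1` and `T(v - w) = -(v - w)` with `v - w ≠ 0`;
hence `-1` is an eigenvalue of `T`. -/
theorem exists_counterexample_operator_on_C_Icc :
    ∃ (T : C(Set.Icc (-1 : ℝ) 1, ℝ) →L[ℝ] C(Set.Icc (-1 : ℝ) 1, ℝ))
      (u v w : C(Set.Icc (-1 : ℝ) 1, ℝ)),
      (∀ x : Set.Icc (-1 : ℝ) 1, u x = 1 - |x.1|) ∧
      (∀ x : Set.Icc (-1 : ℝ) 1, v x = max (-x.1) 0) ∧
      (∀ x : Set.Icc (-1 : ℝ) 1, w x = max x.1 0) ∧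
      (∀ (f : C(Set.Icc (-1 : ℝ) 1, ℝ)) (x : Set.Icc (-1 : ℝ) 1),
        T f x = (1 / 2) * (∫ y : Set.Icc (-1 : ℝ) 1, f y) * u x
          + f ⟨1, by norm_num⟩ * v x + f ⟨-1, by norm_num⟩ * w x) ∧
      (∀ f : C(Set.Icc (-1 : ℝ) 1, ℝ), 0 ≤ f → 0 ≤ T f) ∧
      T 1 = 1 ∧ T (v - w) = -(v - w) ∧ v - w ≠ 0 := by
  refine ⟨TentRamp.operator, TentRamp.tent, TentRamp.leftRamp, TentRamp.rightRamp,
    fun _ => rfl, fun _ => rfl, fun _ => rfl, ?_, ?_, TentRamp.operator_one,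
    TentRamp.operator_leftRamp_sub_rightRamp, TentRamp.leftRamp_sub_rightRamp_ne_zero⟩
  · exact ContinuousMap.integralEvalOperator_apply _ _ _ _ _ _
  · exact fun f => ContinuousMap.integralEvalOperator_nonneg (by norm_num) TentRamp.tent_nonneg
      TentRamp.leftRamp_nonneg TentRamp.rightRamp_nonneg _ _
end

section
/- Let (Ω, μ) be a σ-finite measure space, p ∈ [1, ∞), and let T be a positive integral operator on L^p(Ω, μ) with measurable kernel k : Ω × Ω → [0, ∞), i.e., (Tf)(ω) = ∫ k(ω, ω') f(ω') dμ(ω') for a.e. ω. Assume that for every measurable set M ⊆ Ω of nonzero measure, ∫_{M × M} k d(μ ⊗ μ) > 0. Then for every f ∈ L^p with f ≥ 0, the support of Tf contains the support of f up to a null set; that is, μ({ω : f(ω) > 0} \ {ω : (Tf)(ω) > 0}) = 0. -/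
open MeasureTheory
open scoped ENNReal

/-! If `f ≥ 0` but `T f` vanished on a set `M` of positive measure inside the support of `f`,
then for a.e. `ω ∈ M` the nonnegative function `k ω · * f` would integrate to zero, so `k ω ·`
would vanish a.e. on the support of `f`, in particular on `M`. By Tonelli `k` then integrates
to zero over `M × M`, contradicting the positivity assumption on the kernel. -/

theorem measure_diff_setOf_eq_zero_iff {α : Type*} [MeasurableSpace α] {μ : Measure α}
    {P Q : α → Prop} : μ ({x | P x} \ {x | Q x}) = 0 ↔ ∀ᵐ x ∂μ, P x → Q x := by
  rw [ae_iff]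
  simp only [Classical.not_imp]
  rfl

theorem ae_eq_zero_of_pos_of_integral_mul_eq_zero {α : Type*} [MeasurableSpace α]
    {μ : Measure α} {a b : α → ℝ} (ha : 0 ≤ᵐ[μ] a) (hb : 0 ≤ᵐ[μ] b)
    (hab : Integrable (fun x => a x * b x) μ) (h : ∫ x, a x * b x ∂μ = 0) :
    ∀ᵐ x ∂μ, 0 < b x → a x = 0 := by
  have hnonneg : 0 ≤ᵐ[μ] fun x => a x * b x := by
    filter_upwards [ha, hb] with x hax hbx using mul_nonneg hax hbx
  filter_upwards [(integral_eq_zero_iff_of_nonneg_ae hnonneg hab).1 h] with x hx hbx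
  exact (mul_eq_zero.1 hx).resolve_right hbx.ne'

theorem setLIntegral_prod_eq_zero_of_ae_ae {α β : Type*} [MeasurableSpace α]
    [MeasurableSpace β] {μ : Measure α} {ν : Measure β} [SFinite μ] [SFinite ν]
    {s : Set α} {t : Set β} {F : α × β → ℝ≥0∞} (hF : Measurable F)
    (h : ∀ᵐ x ∂μ.restrict s, ∀ᵐ y ∂ν.restrict t, F (x, y) = 0) :
    ∫⁻ z in s ×ˢ t, F z ∂μ.prod ν = 0 := by
  rw [setLIntegral_prod F hF.aemeasurable]
  refine (lintegral_congr_ae (h.mono fun x hx => ?_)).trans lintegral_zero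
  exact (lintegral_congr_ae hx).trans lintegral_zero

theorem ae_pos_integral_kernel_mul_of_pos {Ω : Type*} [MeasurableSpace Ω] {μ : Measure Ω}
    [SFinite μ] {k : Ω → Ω → ℝ} (hk : Measurable (Function.uncurry k))
    (hk0 : ∀ x y, 0 ≤ k x y)
    (hkpos : ∀ M : Set Ω, MeasurableSet M → μ M ≠ 0 →
      0 < ∫⁻ z in M ×ˢ M, ENNReal.ofReal (k z.1 z.2) ∂(μ.prod μ))
    {g : Ω → ℝ} (hg : Measurable g) (hg0 : 0 ≤ᵐ[μ] g)
    (hgi : ∀ᵐ ω ∂μ, Integrable (fun ω' => k ω ω' * g ω') μ) :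
    ∀ᵐ ω ∂μ, 0 < g ω → 0 < ∫ ω', k ω ω' * g ω' ∂μ := by
  set φ : Ω → ℝ := fun ω => ∫ ω', k ω ω' * g ω' ∂μ
  have hφ : Measurable φ :=
    (hk.mul (hg.comp measurable_snd)).stronglyMeasurable.integral_prod_right'.measurable
  rw [← measure_diff_setOf_eq_zero_iff]
  set M : Set Ω := {ω | 0 < g ω} \ {ω | 0 < φ ω}
  have hM : MeasurableSet M :=
    (measurableSet_lt measurable_const hg).diff (measurableSet_lt measurable_const hφ)
  by_contra hM0
  have hvanish :
      ∀ᵐ ω ∂μ.restrict M, ∀ᵐ ω' ∂μ.restrict M, ENNReal.ofReal (k ω ω') = 0 := by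
    filter_upwards [ae_restrict_mem hM, ae_restrict_of_ae hgi] with ω hωM hω
    obtain ⟨-, hφω⟩ := hωM
    have hφ0 : φ ω = 0 := le_antisymm (not_lt.1 hφω)
      (integral_nonneg_of_ae (hg0.mono fun ω' h => mul_nonneg (hk0 ω ω') h))
    filter_upwards [ae_restrict_mem hM, ae_restrict_of_ae
      (ae_eq_zero_of_pos_of_integral_mul_eq_zero (.of_forall (hk0 ω)) hg0 hω hφ0)]
      with ω' hω'M hkω'
    rw [hkω' hω'M.1, ENNReal.ofReal_zero]
  exact (hkpos M hM hM0).ne'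
    (setLIntegral_prod_eq_zero_of_ae_ae (F := fun z => ENNReal.ofReal (k z.1 z.2))
      hk.ennreal_ofReal hvanish)

theorem kernel_operator_increases_support_general
    {Ω : Type*} [MeasurableSpace Ω] (μ : Measure Ω) [SigmaFinite μ]
    (p : ℝ≥0∞)
    (k : Ω → Ω → ℝ) (hk : Measurable (Function.uncurry k)) (hk0 : ∀ x y, 0 ≤ k x y)
    (hkpos : ∀ M : Set Ω, MeasurableSet M → μ M ≠ 0 →
      0 < ∫⁻ z in M ×ˢ M, ENNReal.ofReal (k z.1 z.2) ∂(μ.prod μ))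
    (f : Ω → ℝ) (hf : MemLp f p μ) (hf0 : 0 ≤ f)
    (hfi : ∀ᵐ ω ∂μ, Integrable (fun ω' => k ω ω' * f ω') μ) :
    μ ({ω | 0 < f ω} \ {ω | 0 < ∫ ω', k ω ω' * f ω' ∂μ}) = 0 := by
  obtain ⟨g, hg, hfg⟩ := hf.aestronglyMeasurable
  have hkfg : ∀ ω, (fun ω' => k ω ω' * f ω') =ᵐ[μ] fun ω' => k ω ω' * g ω' := fun ω =>
    hfg.mono fun ω' h => by simp only [h]
  have hpos_g := ae_pos_integral_kernel_mul_of_pos hk hk0 hkpos hg.measurable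
    (hfg.mono fun ω h => h ▸ hf0 ω) (hfi.mono fun ω h => h.congr (hkfg ω))
  have hpos_f : ∀ᵐ ω ∂μ, 0 < f ω → 0 < ∫ ω', k ω ω' * f ω' ∂μ := by
    filter_upwards [hpos_g, hfg] with ω hω hfgω
    rwa [hfgω, integral_congr_ae (hkfg ω)]
  exact measure_diff_setOf_eq_zero_iff.2 hpos_f

/-- If a positive kernel operator `T` on `L^p(μ)` has a kernel `k` whose integral over
`M × M` is strictly positive for every set `M` of nonzero measure, then for every
`0 ≤ f ∈ L^p` the support of `T f` contains the support of `f` up to a null set. -/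
theorem kernel_operator_increases_support
    {Ω : Type*} [MeasurableSpace Ω] (μ : Measure Ω) [SigmaFinite μ]
    (p : ℝ≥0∞) (hp1 : 1 ≤ p) (hp2 : p ≠ ⊤)
    (k : Ω → Ω → ℝ) (hk : Measurable (Function.uncurry k)) (hk0 : ∀ x y, 0 ≤ k x y)
    (hkpos : ∀ M : Set Ω, MeasurableSet M → μ M ≠ 0 →
      0 < ∫⁻ z in M ×ˢ M, ENNReal.ofReal (k z.1 z.2) ∂(μ.prod μ))
    (f : Ω → ℝ) (hf : MemLp f p μ) (hf0 : 0 ≤ f)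
    (hfi : ∀ᵐ ω ∂μ, Integrable (fun ω' => k ω ω' * f ω') μ) :
    μ ({ω | 0 < f ω} \ {ω | 0 < ∫ ω', k ω ω' * f ω' ∂μ}) = 0 :=
  kernel_operator_increases_support_general μ p k hk hk0 hkpos f hf hf0 hfi
end
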